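/- Let A be a unital C*-algebra and let a, b ∈ A with 0 ≤ a, b ≤ 1. Then a and b are orthogonal (ab = 0) if and only if a + b ≤ 1 and a is absolutely compatible with b. -/

import Mathlib

/-!
For positive `a, b` one has `(a + b)² - (a - b)² = 2 (ab + ba)`, so `|a - b| = a + b` exactly when
`a` and `b` anticommute; and anticommuting positive elements are orthogonal, since `b` then commutes
with `a²` and hence with `a = √(a²)`, which turns `ab = -ba` into `2ab = 0`. Once `a + b ≤ 1`, the
second summand is `|1 - a - b| = 1 - a - b`, so absolute compatibility says exactly
`|a - b| = a + b`. Conversely `ab = 0` forces `a + b ≤ 1`, because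
`b = (1 - a) b (1 - a) ≤ (1 - a)² ≤ 1 - a`.
-/

/-- The absolute value `|x| = (x* x)^(1/2)` in a C*-algebra. -/
noncomputable def cstarAbs {A : Type*} [CStarAlgebra A] [PartialOrder A] [StarOrderedRing A]
    (x : A) : A := CFC.sqrt (star x * x)

lemma eq_zero_of_add_self_eq_zero {M : Type*} [AddCommGroup M] [Module ℂ M] {x : M}
    (h : x + x = 0) : x = 0 := by
  rw [← two_smul ℂ] at h
  exact (smul_eq_zero.mp h).resolve_left two_ne_zero

lemma mul_self_add_sub_mul_self_sub {R : Type*} [Ring R] (a b : R) :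
    (a + b) * (a + b) - (a - b) * (a - b) = (a * b + b * a) + (a * b + b * a) := by
  noncomm_ring

lemma IsSelfAdjoint.mul_eq_zero_symm {R : Type*} [NonUnitalRing R] [StarRing R] {a b : R}
    (ha : IsSelfAdjoint a) (hb : IsSelfAdjoint b) (h : a * b = 0) : b * a = 0 := by
  simpa [ha.star_eq, hb.star_eq] using congrArg star h

section

variable {A : Type*} [CStarAlgebra A] [PartialOrder A] [StarOrderedRing A]

lemma cstarAbs_eq_cfcAbs (x : A) : cstarAbs x = CFC.abs x := rfl

lemma Commute.of_mul_self_right {a b : A} (ha : 0 ≤ a) (h : Commute b (a * a)) :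
    Commute b a := by
  have := (h.symm.cfc_nnreal NNReal.sqrt).symm
  rwa [← CFC.sqrt_eq_cfc, CFC.sqrt_mul_self a ha] at this

lemma mul_eq_zero_of_mul_add_mul_eq_zero {a b : A} (ha : 0 ≤ a) (h : a * b + b * a = 0) :
    a * b = 0 := by
  have hba : b * a = -(a * b) := eq_neg_of_add_eq_zero_right h
  have hcomm : Commute b a := by
    refine Commute.of_mul_self_right ha ?_
    calc b * (a * a) = b * a * a := (mul_assoc _ _ _).symm
      _ = a * a * b := by rw [hba, neg_mul, mul_assoc, hba, mul_neg, neg_neg, mul_assoc]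
  rw [hcomm.eq] at h
  exact eq_zero_of_add_self_eq_zero h

lemma CFC.abs_sub_eq_add_iff {a b : A} (ha : 0 ≤ a) (hb : 0 ≤ b) :
    CFC.abs (a - b) = a + b ↔ a * b = 0 := by
  have hsub : IsSelfAdjoint (a - b) := .sub (.of_nonneg ha) (.of_nonneg hb)
  rw [CFC.abs, CFC.sqrt_eq_iff _ _ (star_mul_self_nonneg _) (add_nonneg ha hb), hsub.star_eq,
    ← sub_eq_zero, mul_self_add_sub_mul_self_sub]
  refine ⟨fun h => mul_eq_zero_of_mul_add_mul_eq_zero ha (eq_zero_of_add_self_eq_zero h),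
    fun h => ?_⟩
  have hba : b * a = 0 := (IsSelfAdjoint.of_nonneg ha).mul_eq_zero_symm (.of_nonneg hb) h
  rw [h, hba, add_zero, add_zero]

lemma add_le_one_of_mul_eq_zero {a b : A} (ha0 : 0 ≤ a) (ha1 : a ≤ 1) (hb1 : b ≤ 1)
    (h : a * b = 0) : a + b ≤ 1 := by
  have hsa : IsSelfAdjoint a := .of_nonneg ha0
  have hba : b * a = 0 := hsa.mul_eq_zero_symm (.of_le hb1 (.one A)) h
  have hconj : star (1 - a) * b * (1 - a) = b := by
    simp [hsa.star_eq, mul_sub, sub_mul, h, hba]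
  have hsq : (1 - a) ^ 2 ≤ 1 - a := by
    simpa using CStarAlgebra.pow_antitone (sub_nonneg.mpr ha1) (by simpa using ha0) one_le_two
  have hb : b ≤ 1 - a := calc
    b = star (1 - a) * b * (1 - a) := hconj.symm
    _ ≤ star (1 - a) * 1 * (1 - a) := star_left_conjugate_le_conjugate hb1 _
    _ = (1 - a) ^ 2 := by simp [hsa.star_eq, sq]
    _ ≤ 1 - a := hsq
  rwa [le_sub_iff_add_le, add_comm] at hb

end

/-- For `0 ≤ a, b ≤ 1` in a unital C*-algebra, `a` and `b` are orthogonal (`ab = 0`)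
iff `a + b ≤ 1` and `a` is absolutely compatible with `b`. -/
theorem stmt3 {A : Type*} [CStarAlgebra A] [PartialOrder A] [StarOrderedRing A]
    (a b : A) (ha0 : 0 ≤ a) (ha1 : a ≤ 1) (hb0 : 0 ≤ b) (hb1 : b ≤ 1) :
    a * b = 0 ↔ (a + b ≤ 1 ∧ cstarAbs (a - b) + cstarAbs (1 - a - b) = 1) := by
  have hcompl : a + b ≤ 1 → cstarAbs (1 - a - b) = 1 - a - b := fun hle =>
    CFC.abs_of_nonneg _ (by rwa [sub_sub, sub_nonneg])
  simp only [cstarAbs_eq_cfcAbs] at hcompl ⊢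
  constructor
  · intro h
    have hle := add_le_one_of_mul_eq_zero ha0 ha1 hb1 h
    refine ⟨hle, ?_⟩
    rw [hcompl hle, (CFC.abs_sub_eq_add_iff ha0 hb0).mpr h]
    abel
  · rintro ⟨hle, habs⟩
    rw [hcompl hle, ← eq_sub_iff_add_eq, sub_sub, sub_sub_cancel] at habs
    exact (CFC.abs_sub_eq_add_iff ha0 hb0).mp habs
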